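/- arXiv:1410.3877 — 13 statements merged into one kernel-verified Lean document; each statement's English description precedes it below -/
import Mathlib

section
/- An interval game (N,w) is selection monotonic (i.e., every selection of w is a monotonic game) if and only if for every pair of coalitions S, T ⊆ N with S a proper subset of T, the upper bound of w on S is at most the lower bound of w on T, i.e., w̄(S) ≤ w̲(T) for S ⊊ T. -/
/-- `v` is a selection of the interval game with lower bounds `wl` and upper bounds `wu`. -/
def IsSelection {n : ℕ} (wl wu v : Finset (Fin n) → ℝ) : Prop :=
  ∀ S : Finset (Fin n), wl S ≤ v S ∧ v S ≤ wu S

/-- A classical cooperative game is monotonic. -/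
def MonotonicGame {n : ℕ} (v : Finset (Fin n) → ℝ) : Prop :=
  ∀ T S : Finset (Fin n), T ⊆ S → v T ≤ v S

/-- An interval game is selection monotonic iff `w̄(S) ≤ w̲(T)` for all `S ⊊ T`. -/
theorem selection_monotonic_iff {n : ℕ} (wl wu : Finset (Fin n) → ℝ)
    (hw : ∀ S, wl S ≤ wu S) (hl0 : wl ∅ = 0) (hu0 : wu ∅ = 0) :
    (∀ v : Finset (Fin n) → ℝ, IsSelection wl wu v → MonotonicGame v) ↔
      (∀ S T : Finset (Fin n), S ⊂ T → wu S ≤ wl T) := by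
  constructor
  · intro h S T hST
    set v : Finset (Fin n) → ℝ := fun X => if X = S then wu S else wl X with hv
    have hsel : IsSelection wl wu v := by
      intro X
      by_cases hx : X = S <;> simp [hv, hx, hw S, hw X, le_refl]
    have hmono := h v hsel S T hST.subset
    have hTS : T ≠ S := fun e => hST.ne e.symm
    simpa [hv, hTS] using hmono
  · intro h v hsel T S hTS
    rcases eq_or_ne T S with rfl | hne
    · exact le_refl _
    · have : T ⊂ S := ⟨hTS, fun hs => hne (le_antisymm hTS hs)⟩
      exact le_trans (hsel T).2 (le_trans (h T S this) (hsel S).1)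
end

section
/- An interval game (N,w) is selection superadditive (i.e., every selection of w is a superadditive game) if and only if for every pair of nonempty disjoint coalitions S, T ⊆ N one has w̄(S) + w̄(T) ≤ w̲(S ∪ T). -/
/-- A classical cooperative game is superadditive. -/
def SuperadditiveGame {n : ℕ} (v : Finset (Fin n) → ℝ) : Prop :=
  ∀ S T : Finset (Fin n), Disjoint S T → v S + v T ≤ v (S ∪ T)

/-- An interval game is selection superadditive iff
`w̄(S) + w̄(T) ≤ w̲(S ∪ T)` for all nonempty disjoint `S`, `T`. -/
theorem selection_superadditive_iff {n : ℕ} (wl wu : Finset (Fin n) → ℝ)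
    (hw : ∀ S, wl S ≤ wu S) (hl0 : wl ∅ = 0) (hu0 : wu ∅ = 0) :
    (∀ v : Finset (Fin n) → ℝ, IsSelection wl wu v → SuperadditiveGame v) ↔
      (∀ S T : Finset (Fin n), Disjoint S T → S.Nonempty → T.Nonempty →
        wu S + wu T ≤ wl (S ∪ T)) := by
  constructor
  · intro h S T hST hS hT
    set v : Finset (Fin n) → ℝ := fun X => if X = S ∨ X = T then wu X else wl X with hv
    have hsel : IsSelection wl wu v := by
      intro X
      by_cases hx : X = S ∨ X = T <;> simp [hv, hx, hw X, le_refl]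
    have hsup := h v hsel S T hST
    have hUneS : S ∪ T ≠ S := fun he => hT.ne_empty (Finset.disjoint_left.mp hST.symm |> fun _ => by
      have hTS : T ⊆ S := he ▸ Finset.subset_union_right
      exact Finset.eq_empty_of_forall_notMem fun x hx => Finset.disjoint_left.mp hST (hTS hx) hx)
    have hUneT : S ∪ T ≠ T := fun he => hS.ne_empty (by
      have hTS : S ⊆ T := he ▸ Finset.subset_union_left
      exact Finset.eq_empty_of_forall_notMem fun x hx => Finset.disjoint_left.mp hST hx (hTS hx))
    have e1 : v S = wu S := by simp [hv]
    have e2 : v T = wu T := by simp [hv]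
    have e3 : v (S ∪ T) = wl (S ∪ T) := by simp [hv, hUneS, hUneT]
    rw [e1, e2, e3] at hsup
    exact hsup

  · intro h v hsel S T hST
    rcases S.eq_empty_or_nonempty with hS | hS
    · subst hS
      have h0 : v ∅ = 0 := le_antisymm (hu0 ▸ (hsel ∅).2) (hl0 ▸ (hsel ∅).1)
      simp [h0]
    rcases T.eq_empty_or_nonempty with hT | hT
    · subst hT
      have h0 : v ∅ = 0 := le_antisymm (hu0 ▸ (hsel ∅).2) (hl0 ▸ (hsel ∅).1)
      simp [h0]
    calc v S + v T ≤ wu S + wu T := add_le_add (hsel S).2 (hsel T).2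
      _ ≤ wl (S ∪ T) := h S T hST hS hT
      _ ≤ v (S ∪ T) := (hsel _).1
end

section
/- An interval game (N,w) is selection convex (i.e., every selection of w is a convex game) if and only if for every pair of nonempty coalitions S, T ⊆ N with S ⊄ T and T ⊄ S one has w̄(S) + w̄(T) ≤ w̲(S ∪ T) + w̲(S ∩ T). -/
/-- A classical cooperative game is convex (supermodular). -/
def ConvexGame {n : ℕ} (v : Finset (Fin n) → ℝ) : Prop :=
  ∀ S T : Finset (Fin n), v S + v T ≤ v (S ∪ T) + v (S ∩ T)

/-- An interval game is selection convex iff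
`w̄(S) + w̄(T) ≤ w̲(S ∪ T) + w̲(S ∩ T)` for all nonempty incomparable `S`, `T`. -/
theorem selection_convex_iff {n : ℕ} (wl wu : Finset (Fin n) → ℝ)
    (hw : ∀ S, wl S ≤ wu S) (hl0 : wl ∅ = 0) (hu0 : wu ∅ = 0) :
    (∀ v : Finset (Fin n) → ℝ, IsSelection wl wu v → ConvexGame v) ↔
      (∀ S T : Finset (Fin n), ¬ S ⊆ T → ¬ T ⊆ S → S.Nonempty → T.Nonempty →
        wu S + wu T ≤ wl (S ∪ T) + wl (S ∩ T)) := by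
  constructor
  · intro h S T hST hTS _ _
    set v : Finset (Fin n) → ℝ := fun A => if A = S ∨ A = T then wu A else wl A with hv
    have hsel : IsSelection wl wu v := by
      intro A
      by_cases hA : A = S ∨ A = T <;> simp [hv, hA, hw A]
    have hc := h v hsel S T
    have h1 : v S = wu S := by simp [hv]
    have h2 : v T = wu T := by simp [hv]
    have h3 : v (S ∪ T) = wl (S ∪ T) := by
      have : ¬ (S ∪ T = S ∨ S ∪ T = T) := by
        rintro (h' | h')
        · exact hTS (by rw [← h']; exact Finset.subset_union_right)
        · exact hST (by rw [← h']; exact Finset.subset_union_left)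
      simp only [hv]; rw [if_neg this]
    have h4 : v (S ∩ T) = wl (S ∩ T) := by
      have : ¬ (S ∩ T = S ∨ S ∩ T = T) := by
        rintro (h' | h')
        · exact hST (by rw [← h']; exact Finset.inter_subset_right)
        · exact hTS (by rw [← h']; exact Finset.inter_subset_left)
      simp only [hv]; rw [if_neg this]
    rw [h1, h2, h3, h4] at hc
    exact hc
  · intro h v hsel S T
    by_cases hST : S ⊆ T
    · have h1 : S ∪ T = T := Finset.union_eq_right.mpr hST
      have h2 : S ∩ T = S := Finset.inter_eq_left.mpr hST
      rw [h1, h2]; linarith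
    by_cases hTS : T ⊆ S
    · have h1 : S ∪ T = S := Finset.union_eq_left.mpr hTS
      have h2 : S ∩ T = T := Finset.inter_eq_right.mpr hTS
      rw [h1, h2]
    have hSne : S.Nonempty := by
      rcases S.eq_empty_or_nonempty with h' | h'
      · exact absurd (h' ▸ Finset.empty_subset T) hST
      · exact h'
    have hTne : T.Nonempty := by
      rcases T.eq_empty_or_nonempty with h' | h'
      · exact absurd (h' ▸ Finset.empty_subset S) hTS
      · exact h'
    have key := h S T hST hTS hSne hTne
    have := (hsel S).2
    have := (hsel T).2
    have := (hsel (S ∪ T)).1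
    have := (hsel (S ∩ T)).1
    linarith
end

section
/- An interval game (N,w) is selection convex if and only if for all coalitions T₁, T₂ ⊆ N and every player i ∈ N with T₁ a proper subset of T₂ and T₂ ⊆ N \ {i}, one has w̄(T₁ ∪ {i}) − w̲(T₁) ≤ w̲(T₂ ∪ {i}) − w̄(T₂). -/
section Marginals

variable {α G : Type*} [DecidableEq α] [AddCommGroup G] [PartialOrder G] [IsOrderedAddMonoid G]

def HasMonotoneMarginals (v : Finset α → G) : Prop :=
  ∀ ⦃A B : Finset α⦄ ⦃i : α⦄, A ⊆ B → i ∉ B → v (insert i A) - v A ≤ v (insert i B) - v B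

theorem HasMonotoneMarginals.sub_le_sub_union {v : Finset α → G} (hv : HasMonotoneMarginals v)
    {A B D : Finset α} (hAB : A ⊆ B) (hBD : Disjoint B D) :
    v (A ∪ D) - v A ≤ v (B ∪ D) - v B := by
  induction D using Finset.induction_on with
  | empty => simp
  | insert a D haD ih =>
    rw [Finset.disjoint_insert_right] at hBD
    have step : v (insert a (A ∪ D)) - v (A ∪ D) ≤ v (insert a (B ∪ D)) - v (B ∪ D) :=
      hv (Finset.union_subset_union hAB subset_rfl) (by simp [hBD.1, haD])
    rw [Finset.union_insert, Finset.union_insert]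
    calc v (insert a (A ∪ D)) - v A
        = (v (insert a (A ∪ D)) - v (A ∪ D)) + (v (A ∪ D) - v A) := (sub_add_sub_cancel ..).symm
      _ ≤ (v (insert a (B ∪ D)) - v (B ∪ D)) + (v (B ∪ D) - v B) := add_le_add step (ih hBD.2)
      _ = v (insert a (B ∪ D)) - v B := sub_add_sub_cancel ..

theorem HasMonotoneMarginals.add_le_union_add_inter {v : Finset α → G}
    (hv : HasMonotoneMarginals v) (S T : Finset α) :
    v S + v T ≤ v (S ∪ T) + v (S ∩ T) := by
  have h := hv.sub_le_sub_union (A := S ∩ T) (D := S \ T)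
    Finset.inter_subset_right Finset.disjoint_sdiff
  rw [show S ∩ T ∪ S \ T = S from sup_inf_sdiff S T, Finset.union_sdiff_self_eq_union,
    Finset.union_comm] at h
  exact sub_le_sub_iff.mp h

end Marginals

section IntervalGame

variable {n : ℕ} {wl wu : Finset (Fin n) → ℝ}

theorem isSelection_ite (hw : ∀ S, wl S ≤ wu S) (P : Finset (Fin n) → Prop) [DecidablePred P] :
    IsSelection wl wu (fun S => if P S then wu S else wl S) := by
  intro S
  dsimp only
  split_ifs
  · exact ⟨hw S, le_rfl⟩
  · exact ⟨le_rfl, hw S⟩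

theorem marginal_bound_of_selection_convex (hw : ∀ S, wl S ≤ wu S)
    (hconv : ∀ v, IsSelection wl wu v → ConvexGame v) {T₁ T₂ : Finset (Fin n)} {i : Fin n}
    (h₁₂ : T₁ ⊂ T₂) (hi : i ∉ T₂) :
    wu (insert i T₁) - wl T₁ ≤ wl (insert i T₂) - wu T₂ := by
  have hi₁ : i ∉ T₁ := fun h => hi (h₁₂.subset h)
  have h := hconv _ (isSelection_ite hw (fun S => S = insert i T₁ ∨ S = T₂)) (insert i T₁) T₂
  have hunion : insert i T₁ ∪ T₂ = insert i T₂ := by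
    rw [Finset.insert_union, Finset.union_eq_right.mpr h₁₂.subset]
  have hinter : insert i T₁ ∩ T₂ = T₁ := by
    rw [Finset.insert_inter_of_notMem hi, Finset.inter_eq_left.mpr h₁₂.subset]
  have hne₁ : T₁ ≠ insert i T₁ := fun h => hi₁ (h ▸ Finset.mem_insert_self i T₁)
  have hne₂ : insert i T₂ ≠ insert i T₁ := fun h => h₁₂.ne <| by
    simpa [Finset.erase_insert hi, Finset.erase_insert hi₁] using (congrArg (·.erase i) h).symm
  have hne₃ : insert i T₂ ≠ T₂ := fun h => hi (h ▸ Finset.mem_insert_self i T₂)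
  simp only [hunion, hinter, hne₁, hne₂, hne₃, h₁₂.ne, true_or, or_true, or_self, if_true,
    if_false] at h
  linarith

theorem IsSelection.hasMonotoneMarginals
    (hbound : ∀ ⦃T₁ T₂ : Finset (Fin n)⦄ ⦃i : Fin n⦄, T₁ ⊂ T₂ → i ∉ T₂ →
      wu (insert i T₁) - wl T₁ ≤ wl (insert i T₂) - wu T₂)
    {v : Finset (Fin n) → ℝ} (hv : IsSelection wl wu v) : HasMonotoneMarginals v := by
  intro A B i hAB hi
  rcases hAB.eq_or_ssubset with rfl | hAB
  · exact le_rfl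
  have := hbound hAB hi
  linarith [(hv (insert i A)).2, (hv A).1, (hv (insert i B)).1, (hv B).2]

end IntervalGame

theorem selection_convex_iff_single_marginal_general {n : ℕ} (wl wu : Finset (Fin n) → ℝ)
    (hw : ∀ S, wl S ≤ wu S) :
    (∀ v : Finset (Fin n) → ℝ, IsSelection wl wu v → ConvexGame v) ↔
      (∀ (T₁ T₂ : Finset (Fin n)) (i : Fin n), T₁ ⊂ T₂ → T₂ ⊆ Finset.univ \ {i} →
        wu (T₁ ∪ {i}) - wl T₁ ≤ wl (T₂ ∪ {i}) - wu T₂) := by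
  simp only [Finset.union_singleton, ← Finset.compl_eq_univ_sdiff, Finset.subset_compl_singleton]
  exact ⟨fun hconv _ _ _ h₁₂ hi => marginal_bound_of_selection_convex hw hconv h₁₂ hi,
    fun hbound v hv => (hv.hasMonotoneMarginals hbound).add_le_union_add_inter⟩

/-- An interval game is selection convex iff
`w̄(T₁ ∪ {i}) − w̲(T₁) ≤ w̲(T₂ ∪ {i}) − w̄(T₂)` whenever `T₁ ⊊ T₂ ⊆ N \ {i}`. -/
theorem selection_convex_iff_single_marginal {n : ℕ} (wl wu : Finset (Fin n) → ℝ)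
    (hw : ∀ S, wl S ≤ wu S) (hl0 : wl ∅ = 0) (hu0 : wu ∅ = 0) :
    (∀ v : Finset (Fin n) → ℝ, IsSelection wl wu v → ConvexGame v) ↔
      (∀ (T₁ T₂ : Finset (Fin n)) (i : Fin n), T₁ ⊂ T₂ → T₂ ⊆ Finset.univ \ {i} →
        wu (T₁ ∪ {i}) - wl T₁ ≤ wl (T₂ ∪ {i}) - wu T₂) :=
  selection_convex_iff_single_marginal_general wl wu hw
end

section
/- For every finite player set N with |N| > 1, there exists an interval game (N,w) that is selection superadditive but is not a superadditive interval game; in particular, the game defined by w(S) = [2|S| − 2, 2|S| − 1] for every nonempty S ⊆ N and w(∅) = [0,0] is selection superadditive while its length game |w| is not superadditive. -/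
/-- A superadditive interval game: `w(S) + w(T) ⪯ w(S ∪ T)` for disjoint `S`, `T`,
and the length game is superadditive. -/
def SuperadditiveIntervalGame {n : ℕ} (wl wu : Finset (Fin n) → ℝ) : Prop :=
  (∀ S T : Finset (Fin n), Disjoint S T →
    wl S + wl T ≤ wl (S ∪ T) ∧ wu S + wu T ≤ wu (S ∪ T)) ∧
  SuperadditiveGame (fun S => wu S - wl S)

/-- Lower bound of the game `w(S) = [2|S| − 2, 2|S| − 1]` for nonempty `S`, `w(∅) = [0,0]`. -/
noncomputable def wl5 {n : ℕ} (S : Finset (Fin n)) : ℝ :=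
  if S = ∅ then 0 else 2 * (S.card : ℝ) - 2

/-- Upper bound of the game `w(S) = [2|S| − 2, 2|S| − 1]` for nonempty `S`, `w(∅) = [0,0]`. -/
noncomputable def wu5 {n : ℕ} (S : Finset (Fin n)) : ℝ :=
  if S = ∅ then 0 else 2 * (S.card : ℝ) - 1

section Selection

variable {n : ℕ} {wl wu v : Finset (Fin n) → ℝ}

theorem IsSelection.apply_empty (hv : IsSelection wl wu v) (hl : wl ∅ = 0) (hu : wu ∅ = 0) :
    v ∅ = 0 :=
  le_antisymm (hu ▸ (hv ∅).2) (hl ▸ (hv ∅).1)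

theorem IsSelection.superadditiveGame (hv : IsSelection wl wu v) (hl : wl ∅ = 0)
    (hu : wu ∅ = 0)
    (hlu : ∀ S T, S.Nonempty → T.Nonempty → Disjoint S T → wu S + wu T ≤ wl (S ∪ T)) :
    SuperadditiveGame v := by
  intro S T hST
  have hempty := hv.apply_empty hl hu
  rcases S.eq_empty_or_nonempty with rfl | hS
  · simp [hempty]
  rcases T.eq_empty_or_nonempty with rfl | hT
  · simp [hempty]
  calc v S + v T ≤ wu S + wu T := add_le_add (hv S).2 (hv T).2
    _ ≤ wl (S ∪ T) := hlu S T hS hT hST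
    _ ≤ v (S ∪ T) := (hv _).1

end Selection

section Example

variable {n : ℕ}

theorem wl5_empty : wl5 (∅ : Finset (Fin n)) = 0 := if_pos rfl

theorem wu5_empty : wu5 (∅ : Finset (Fin n)) = 0 := if_pos rfl

theorem wl5_of_nonempty {S : Finset (Fin n)} (hS : S.Nonempty) : wl5 S = 2 * S.card - 2 :=
  if_neg hS.ne_empty

theorem wu5_of_nonempty {S : Finset (Fin n)} (hS : S.Nonempty) : wu5 S = 2 * S.card - 1 :=
  if_neg hS.ne_empty

theorem wu5_add_wu5_eq_wl5_union {S T : Finset (Fin n)} (hS : S.Nonempty) (hT : T.Nonempty)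
    (hST : Disjoint S T) : wu5 S + wu5 T = wl5 (S ∪ T) := by
  rw [wu5_of_nonempty hS, wu5_of_nonempty hT, wl5_of_nonempty (hS.mono Finset.subset_union_left),
    Finset.card_union_of_disjoint hST]
  push_cast
  ring

theorem wu5_sub_wl5_of_nonempty {S : Finset (Fin n)} (hS : S.Nonempty) : wu5 S - wl5 S = 1 := by
  rw [wu5_of_nonempty hS, wl5_of_nonempty hS]
  ring

theorem not_superadditiveGame_wu5_sub_wl5 (hn : 1 < n) :
    ¬ SuperadditiveGame (fun S : Finset (Fin n) => wu5 S - wl5 S) := by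
  intro h
  have hab : (⟨0, by omega⟩ : Fin n) ≠ ⟨1, hn⟩ := by simp
  have hsum := h {⟨0, by omega⟩} {⟨1, hn⟩} (Finset.disjoint_singleton.2 hab)
  simp only [wu5_sub_wl5_of_nonempty (Finset.singleton_nonempty _),
    wu5_sub_wl5_of_nonempty (Finset.singleton_nonempty _ |>.mono Finset.subset_union_left)] at hsum
  norm_num at hsum

end Example

/-- For `|N| > 1`, the game `w(S) = [2|S| − 2, 2|S| − 1]` (for nonempty `S`) is selection
superadditive, its length game is not superadditive, and it is not a superadditive
interval game. -/
theorem selection_superadditive_not_interval_superadditive {n : ℕ} (hn : 1 < n) :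
    (∀ v : Finset (Fin n) → ℝ, IsSelection wl5 wu5 v → SuperadditiveGame v) ∧
    ¬ SuperadditiveGame (fun S : Finset (Fin n) => wu5 S - wl5 S) ∧
    ¬ SuperadditiveIntervalGame (wl5 (n := n)) wu5 := by
  have hlength := not_superadditiveGame_wu5_sub_wl5 hn
  refine ⟨fun v hv => hv.superadditiveGame wl5_empty wu5_empty ?_, hlength, fun h => hlength h.2⟩
  exact fun S T hS hT hST => (wu5_add_wu5_eq_wl5_union hS hT hST).le
end

section
/- For every finite player set N with |N| > 1, there exists an interval game (N,w') that is a superadditive interval game but is not selection superadditive; in particular, the game defined by w'(S) = [0, |S|] for every nonempty S ⊆ N and w'(∅) = [0,0] is a superadditive interval game but not selection superadditive. -/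
/-- Lower bound of the game `w'(S) = [0, |S|]` (also `w'(∅) = [0,0]`). -/
def wl6 {n : ℕ} (_S : Finset (Fin n)) : ℝ := 0

/-- Upper bound of the game `w'(S) = [0, |S|]` (also `w'(∅) = [0,0]`). -/
def wu6 {n : ℕ} (S : Finset (Fin n)) : ℝ := (S.card : ℝ)

/-!
The bounds `0` and `|S|` are both additive, so `w'` is a superadditive interval game. The selection
that pays `1` to every single player and `0` to every other coalition lies in `w'`, but two players
together get `0 < 1 + 1`, so it is not superadditive.
-/

theorem superadditiveGame_card {n : ℕ} :
    SuperadditiveGame (fun S : Finset (Fin n) => (S.card : ℝ)) :=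
  fun _ _ hST => by
    simp only [Finset.card_union_of_disjoint hST, Nat.cast_add, le_refl]

theorem superadditiveIntervalGame_wl6_wu6 {n : ℕ} :
    SuperadditiveIntervalGame (wl6 (n := n)) wu6 :=
  ⟨fun S T hST => ⟨by simp only [wl6, add_zero, le_refl], superadditiveGame_card S T hST⟩,
    by simpa only [wl6, wu6, sub_zero] using superadditiveGame_card⟩

def singletonGame {n : ℕ} (S : Finset (Fin n)) : ℝ := if S.card = 1 then 1 else 0

theorem isSelection_singletonGame {n : ℕ} : IsSelection wl6 wu6 (singletonGame (n := n)) := by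
  intro S
  unfold wl6 wu6 singletonGame
  split_ifs with h
  · simp [h]
  · simp

theorem not_superadditiveGame_singletonGame {n : ℕ} (hn : 1 < n) :
    ¬ SuperadditiveGame (singletonGame (n := n)) := by
  intro h
  have hab : (⟨0, by omega⟩ : Fin n) ≠ ⟨1, hn⟩ := by simp
  have hpair := h {⟨0, by omega⟩} {⟨1, hn⟩} (Finset.disjoint_singleton.2 hab)
  simp only [singletonGame, Finset.card_singleton, ← Finset.insert_eq,
    Finset.card_pair hab] at hpair
  norm_num at hpair

/-- For `|N| > 1`, the game `w'(S) = [0, |S|]` is a superadditive interval game but is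
not selection superadditive. -/
theorem interval_superadditive_not_selection_superadditive {n : ℕ} (hn : 1 < n) :
    SuperadditiveIntervalGame (wl6 (n := n)) wu6 ∧
    ¬ (∀ v : Finset (Fin n) → ℝ, IsSelection wl6 wu6 v → SuperadditiveGame v) :=
  ⟨superadditiveIntervalGame_wl6_wu6, fun h =>
    not_superadditiveGame_singletonGame hn (h _ isSelection_singletonGame)⟩
end

section
/- For every finite player set N with |N| > 1, there exists an interval game (N,w') that is a convex interval game but is not selection convex; in particular, the game defined by w'(S) = [0, |S|] for every nonempty S ⊆ N and w'(∅) = [0,0] is a convex interval game but not selection convex. -/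
/-- A convex interval game: both border games and the length game are convex. -/
def ConvexIntervalGame {n : ℕ} (wl wu : Finset (Fin n) → ℝ) : Prop :=
  ConvexGame wl ∧ ConvexGame wu ∧ ConvexGame (fun S => wu S - wl S)

/-- Lower bound of the game `w'(S) = [0, |S|]` (also `w'(∅) = [0,0]`). -/
def wl9 {n : ℕ} (_S : Finset (Fin n)) : ℝ := 0

/-- Upper bound of the game `w'(S) = [0, |S|]` (also `w'(∅) = [0,0]`). -/
def wu9 {n : ℕ} (S : Finset (Fin n)) : ℝ := (S.card : ℝ)

/-- For `|N| > 1`, the game `w'(S) = [0, |S|]` is a convex interval game but not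
selection convex. -/
theorem interval_convex_not_selection_convex {n : ℕ} (hn : 1 < n) :
    ConvexIntervalGame (wl9 (n := n)) wu9 ∧
    ¬ (∀ v : Finset (Fin n) → ℝ, IsSelection wl9 wu9 v → ConvexGame v) := by
  have hcard : ConvexGame (wu9 (n := n)) := by
    intro S T
    unfold wu9
    have h := Finset.card_union_add_card_inter S T
    have : ((S ∪ T).card : ℝ) + ((S ∩ T).card : ℝ) = (S.card : ℝ) + (T.card : ℝ) := by
      exact_mod_cast congrArg (fun k : ℕ => (k : ℝ)) h
    linarith
  refine ⟨⟨fun S T => by simp [wl9], hcard, by simpa [wl9] using hcard⟩, ?_⟩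
  intro h
  haveI : NeZero n := ⟨by omega⟩
  set a : Fin n := ⟨0, by omega⟩
  set b : Fin n := ⟨1, by omega⟩
  have hab : a ≠ b := by simp [a, b, Fin.ext_iff]
  set v : Finset (Fin n) → ℝ := fun S => if S = {a} then 1 else 0 with hv
  have hsel : IsSelection wl9 wu9 v := by
    intro S
    by_cases hS : S = {a}
    · simp [v, hS, wl9, wu9]
    · simp [v, hS, wl9, wu9]
  have := h v hsel {a} {b}
  have h1 : ({a} : Finset (Fin n)) ∪ {b} ≠ {a} := by
    intro heq
    have hb' : b ∈ ({a} : Finset (Fin n)) := heq ▸ (by simp)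
    rw [Finset.mem_singleton] at hb'
    exact hab hb'.symm
  have h2 : ({a} : Finset (Fin n)) ∩ {b} = ∅ := by
    apply Finset.singleton_inter_of_notMem
    simpa using hab
  have hb : ({b} : Finset (Fin n)) ≠ {a} := by
    intro heq
    exact hab (Finset.singleton_injective heq).symm
  have hne : (∅ : Finset (Fin n)) ≠ {a} := (Finset.singleton_ne_empty a).symm
  rw [h2] at this
  simp only [v, if_pos rfl, if_neg h1, if_neg hb, if_neg hne] at this
  linarith
end

section
/- For every interval game (N,w), every real payoff vector generated by the interval core lies in the selection core: gen(𝒞(w)) ⊆ 𝒮𝒞(w). -/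
open Finset

/-- `x` is in the core of the classical game `v`. -/
def InCore {n : ℕ} (v : Finset (Fin n) → ℝ) (x : Fin n → ℝ) : Prop :=
  (∑ i, x i) = v Finset.univ ∧ ∀ S : Finset (Fin n), v S ≤ ∑ i ∈ S, x i

/-- `x` is in the selection core `𝒮𝒞(w)` of the interval game `(wl, wu)`. -/
def InSelectionCore {n : ℕ} (wl wu : Finset (Fin n) → ℝ) (x : Fin n → ℝ) : Prop :=
  ∃ v : Finset (Fin n) → ℝ, IsSelection wl wu v ∧ InCore v x

/-- `x` belongs to `gen(𝒞(w))`: there is an interval vector `(I₁,…,Iₙ)`, given by its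
lower bounds `L` and upper bounds `U`, lying in the interval core `𝒞(w)` and such that
`xᵢ ∈ Iᵢ` for all `i`. -/
def InGenIntervalCore {n : ℕ} (wl wu : Finset (Fin n) → ℝ) (x : Fin n → ℝ) : Prop :=
  ∃ L U : Fin n → ℝ, (∀ i, L i ≤ U i) ∧
    (∑ i, L i) = wl Finset.univ ∧ (∑ i, U i) = wu Finset.univ ∧
    (∀ i, wl {i} ≤ L i ∧ wu {i} ≤ U i) ∧
    (∀ S : Finset (Fin n), S.Nonempty → wl S ≤ ∑ i ∈ S, L i ∧ wu S ≤ ∑ i ∈ S, U i) ∧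
    (∀ i, L i ≤ x i ∧ x i ≤ U i)

/-- Every payoff vector generated by the interval core lies in the selection core:
`gen(𝒞(w)) ⊆ 𝒮𝒞(w)`. -/
theorem genIntervalCore_subset_selectionCore {n : ℕ} (wl wu : Finset (Fin n) → ℝ)
    (hw : ∀ S, wl S ≤ wu S) (hl0 : wl ∅ = 0) (hu0 : wu ∅ = 0) :
    ∀ x : Fin n → ℝ, InGenIntervalCore wl wu x → InSelectionCore wl wu x := by
  rintro x ⟨L, U, hLU, hLsum, hUsum, hsingle, hS, hx⟩
  refine ⟨fun S => min (∑ i ∈ S, x i) (wu S), fun S => ?_, ?_, fun S => min_le_left _ _⟩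
  · constructor
    · rcases S.eq_empty_or_nonempty with rfl | hne
      · simp [hl0, hu0]
      · exact le_min (le_trans (hS S hne).1 (Finset.sum_le_sum fun i _ => (hx i).1)) (hw S)
    · exact min_le_right _ _
  · have h1 : (∑ i, x i) ≤ wu Finset.univ := by
      rw [← hUsum]; exact Finset.sum_le_sum fun i _ => (hx i).2
    simp [min_eq_left h1]
end

section
/- (Core coincidence characterization) For every interval game (N,w), gen(𝒞(w)) = 𝒮𝒞(w) holds if and only if for every x ∈ 𝒮𝒞(w) there exist nonnegative vectors l, u ∈ ℝ^N such that: Σ_{i∈N}(x_i − l_i) = w̲(N), Σ_{i∈N}(x_i + u_i) = w̄(N), Σ_{i∈S}(x_i − l_i) ≥ w̲(S) for every nonempty S ⊆ N, and Σ_{i∈S}(x_i + u_i) ≥ w̄(S) for every nonempty S ⊆ N. -/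
open Finset

/-- Core coincidence characterization: `gen(𝒞(w)) = 𝒮𝒞(w)` iff for every
`x ∈ 𝒮𝒞(w)` there are nonnegative vectors `l`, `u` satisfying the mixed system
(4.1)–(4.4). -/
theorem core_coincidence_characterization {n : ℕ} (wl wu : Finset (Fin n) → ℝ)
    (hw : ∀ S, wl S ≤ wu S) (hl0 : wl ∅ = 0) (hu0 : wu ∅ = 0) :
    ({x : Fin n → ℝ | InGenIntervalCore wl wu x} = {x | InSelectionCore wl wu x}) ↔
      ∀ x : Fin n → ℝ, InSelectionCore wl wu x →
        ∃ l u : Fin n → ℝ, (∀ i, 0 ≤ l i) ∧ (∀ i, 0 ≤ u i) ∧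
          (∑ i, (x i - l i)) = wl Finset.univ ∧
          (∑ i, (x i + u i)) = wu Finset.univ ∧
          (∀ S : Finset (Fin n), S.Nonempty → wl S ≤ ∑ i ∈ S, (x i - l i)) ∧
          (∀ S : Finset (Fin n), S.Nonempty → wu S ≤ ∑ i ∈ S, (x i + u i)) := by
  constructor
  · intro heq x hx
    have hxg : InGenIntervalCore wl wu x := by
      have : x ∈ {x | InSelectionCore wl wu x} := hx
      rw [← heq] at this; exact this
    obtain ⟨L, U, hLU, hsumL, hsumU, _, hS, hx'⟩ := hxg
    refine ⟨fun i => x i - L i, fun i => U i - x i,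
      fun i => show (0:ℝ) ≤ x i - L i by linarith [(hx' i).1],
      fun i => show (0:ℝ) ≤ U i - x i by linarith [(hx' i).2], ?_, ?_, ?_, ?_⟩
    · simpa using hsumL
    · simpa using hsumU
    · intro S hSne
      have := (hS S hSne).1
      calc wl S ≤ ∑ i ∈ S, L i := this
        _ = ∑ i ∈ S, (x i - (x i - L i)) := by ring_nf
        _ ≤ _ := le_of_eq rfl
    · intro S hSne
      have := (hS S hSne).2
      calc wu S ≤ ∑ i ∈ S, U i := this
        _ = ∑ i ∈ S, (x i + (U i - x i)) := by ring_nf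
  · intro h
    ext x
    simp only [Set.mem_setOf_eq]
    constructor
    · rintro ⟨L, U, hLU, hsumL, hsumU, hsing, hS, hx⟩
      refine ⟨fun S => min (∑ i ∈ S, x i) (wu S), ?_, ?_, ?_⟩
      · intro S
        constructor
        · rcases S.eq_empty_or_nonempty with rfl | hSne
          · simp [hl0, hu0]
          · exact le_min (le_trans (hS S hSne).1 (Finset.sum_le_sum fun i _ => (hx i).1))
              (hw S)
        · exact min_le_right _ _
      · have : (∑ i, x i) ≤ wu Finset.univ := by
          rw [← hsumU]; exact Finset.sum_le_sum fun i _ => (hx i).2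
        simp [min_eq_left this]
      · intro S; exact min_le_left _ _
    · rintro hx
      obtain ⟨l, u, hl, hu, hsl, hsu, hSl, hSu⟩ := h x hx
      refine ⟨fun i => x i - l i, fun i => x i + u i,
        fun i => show x i - l i ≤ x i + u i by linarith [hl i, hu i],
        hsl, hsu, ?_, ?_,
        fun i => ⟨show x i - l i ≤ x i by linarith [hl i],
                  show x i ≤ x i + u i by linarith [hu i]⟩⟩
      · intro i
        exact ⟨by simpa using hSl {i} (Finset.singleton_nonempty i),
          by simpa using hSu {i} (Finset.singleton_nonempty i)⟩
      · intro S hSne; exact ⟨hSl S hSne, hSu S hSne⟩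
end

section
/- For every interval game (N,w), if q, r ∈ gen(𝒞(w)) and x ∈ ℝ^N satisfies q_i ≤ x_i ≤ r_i for every i ∈ N, then x ∈ gen(𝒞(w)); that is, gen(𝒞(w)) is order-convex with respect to the componentwise order on ℝ^N. -/
open Finset

/-- `gen(𝒞(w))` is order-convex: if `q, r ∈ gen(𝒞(w))` and `q ≤ x ≤ r`
componentwise, then `x ∈ gen(𝒞(w))`. -/
theorem genIntervalCore_orderConvex {n : ℕ} (wl wu : Finset (Fin n) → ℝ)
    (hw : ∀ S, wl S ≤ wu S) (hl0 : wl ∅ = 0) (hu0 : wu ∅ = 0)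
    (q r x : Fin n → ℝ)
    (hq : InGenIntervalCore wl wu q) (hr : InGenIntervalCore wl wu r)
    (hx : ∀ i, q i ≤ x i ∧ x i ≤ r i) :
    InGenIntervalCore wl wu x := by
  obtain ⟨Lq, Uq, _, hLq, _, hq1, hqS, hqx⟩ := hq
  obtain ⟨Lr, Ur, _, _, hUr, hr1, hrS, hrx⟩ := hr
  refine ⟨Lq, Ur, fun i => ?_, hLq, hUr, fun i => ⟨(hq1 i).1, (hr1 i).2⟩,
    fun S hS => ⟨(hqS S hS).1, (hrS S hS).2⟩, fun i => ?_⟩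
  · exact le_trans (hqx i).1 (le_trans (hx i).1 (le_trans (hx i).2 (hrx i).2))
  · exact ⟨le_trans (hqx i).1 (hx i).1, le_trans (hx i).2 (hrx i).2⟩
end

section
/- An interval game (N,w) has a nonempty strong core if and only if w(N) is a degenerate interval (w̲(N) = w̄(N)) and the upper border game w̄ has a nonempty core. -/
open Finset

/-- `x` is in the strong core of the interval game `(wl, wu)`: it belongs to the core
of every selection. -/
def InStrongCore {n : ℕ} (wl wu : Finset (Fin n) → ℝ) (x : Fin n → ℝ) : Prop :=
  ∀ v : Finset (Fin n) → ℝ, IsSelection wl wu v → InCore v x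

/-- An interval game has a nonempty strong core iff `w(N)` is degenerate and the upper
border game has a nonempty core. -/
theorem strongCore_nonempty_iff {n : ℕ} (wl wu : Finset (Fin n) → ℝ)
    (hw : ∀ S, wl S ≤ wu S) (hl0 : wl ∅ = 0) (hu0 : wu ∅ = 0) :
    (∃ x : Fin n → ℝ, InStrongCore wl wu x) ↔
      (wl Finset.univ = wu Finset.univ ∧ ∃ x : Fin n → ℝ, InCore wu x) := by
  constructor
  · rintro ⟨x, hx⟩
    have hwu : IsSelection wl wu wu := fun S => ⟨hw S, le_refl _⟩
    have hcu := hx wu hwu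
    set v : Finset (Fin n) → ℝ := fun S => if S = Finset.univ then wl Finset.univ else wu S
      with hv
    have hsel : IsSelection wl wu v := by
      intro S
      by_cases h : S = Finset.univ
      · simp [hv, h, hw]
      · simp [hv, h, hw S]
    have hcv := hx v hsel
    refine ⟨?_, ⟨x, hcu⟩⟩
    have h1 : (∑ i, x i) = wl Finset.univ := by simpa [hv] using hcv.1
    have h2 : (∑ i, x i) = wu Finset.univ := hcu.1
    rw [← h1, ← h2]
  · rintro ⟨hdeg, x, hxsum, hxcore⟩
    refine ⟨x, fun v hv => ⟨?_, fun S => le_trans (hv S).2 (hxcore S)⟩⟩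
    have h1 : v Finset.univ ≤ wu Finset.univ := (hv Finset.univ).2
    have h2 : wu Finset.univ ≤ v Finset.univ := hdeg ▸ (hv Finset.univ).1
    rw [hxsum, le_antisymm h1 h2]
end

section
/- For every interval game (N,w), every element c of the strong core of w belongs to gen(𝒞(w)). -/
open Finset

/-- Every element of the strong core belongs to `gen(𝒞(w))`. -/
theorem strongCore_subset_genIntervalCore {n : ℕ} (wl wu : Finset (Fin n) → ℝ)
    (hw : ∀ S, wl S ≤ wu S) (hl0 : wl ∅ = 0) (hu0 : wu ∅ = 0)
    (c : Fin n → ℝ) (hc : InStrongCore wl wu c) :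
    InGenIntervalCore wl wu c := by
  have hl := hc wl (fun S => ⟨le_refl _, hw S⟩)
  have hu := hc wu (fun S => ⟨hw S, le_refl _⟩)
  exact ⟨c, c, fun i => le_refl _, hl.1, hu.1,
    fun i => ⟨hl.2 {i} |>.trans_eq (Finset.sum_singleton _ _),
      hu.2 {i} |>.trans_eq (Finset.sum_singleton _ _)⟩,
    fun S _ => ⟨hl.2 S, hu.2 S⟩, fun i => ⟨le_refl _, le_refl _⟩⟩
end

section
/- Every selection convex interval game has a nonempty selection core: if (N,w) is an interval game all of whose selections are convex games, then 𝒮𝒞(w) ≠ ∅. -/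
open Finset

theorem convex_core_nonempty {n : ℕ} (v : Finset (Fin n) → ℝ) (h0 : v ∅ = 0)
    (hc : ConvexGame v) : ∃ x : Fin n → ℝ, InCore v x := by
  refine ⟨fun i => v (Finset.Iic i) - v (Finset.Iio i), ?_, ?_⟩
  · -- efficiency via telescoping
    have key : ∀ k : ℕ, k ≤ n →
        ∑ i ∈ univ.filter (fun i : Fin n => i.val < k),
            (v (Finset.Iic i) - v (Finset.Iio i))
          = v (univ.filter (fun i : Fin n => i.val < k)) := by
      intro k
      induction k with
      | zero => intro _; simp [h0]
      | succ k ih =>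
        intro hk
        have hk' : k < n := hk
        have hio : Finset.Iio (⟨k, hk'⟩ : Fin n)
            = univ.filter (fun i : Fin n => i.val < k) := by
          ext j; simp [Fin.lt_def]
        have hic : Finset.Iic (⟨k, hk'⟩ : Fin n)
            = univ.filter (fun i : Fin n => i.val < k + 1) := by
          ext j; simp [Fin.le_def, Nat.lt_succ_iff]
        have hset : univ.filter (fun i : Fin n => i.val < k + 1)
            = insert (⟨k, hk'⟩ : Fin n) (univ.filter fun i : Fin n => i.val < k) := by
          ext j
          simp only [mem_filter, mem_univ, true_and, mem_insert, Fin.ext_iff,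
            Nat.lt_succ_iff_lt_or_eq]
          tauto
        have hnm : (⟨k, hk'⟩ : Fin n) ∉ univ.filter (fun i : Fin n => i.val < k) := by
          simp
        rw [hset, Finset.sum_insert hnm, ih (le_of_lt hk'), hio, hic, hset]
        ring
    have huniv : univ.filter (fun i : Fin n => i.val < n) = (univ : Finset (Fin n)) := by
      ext j; simp [j.isLt]
    have := key n le_rfl
    rwa [huniv] at this
  · -- core inequalities by strong induction
    intro S
    induction S using Finset.strongInduction with
    | _ S ih =>
      rcases S.eq_empty_or_nonempty with rfl | hS
      · simp [h0]
      · set m := S.max' hS with hm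
        have hmS : m ∈ S := S.max'_mem hS
        have hunion : S ∪ Finset.Iio m = Finset.Iic m := by
          ext j
          simp only [mem_union, Finset.mem_Iio, Finset.mem_Iic]
          constructor
          · rintro (h | h)
            · exact S.le_max' j h
            · exact le_of_lt h
          · intro h
            rcases eq_or_lt_of_le h with h | h
            · left; rw [h]; exact hmS
            · right; exact h
        have hinter : S ∩ Finset.Iio m = S.erase m := by
          ext j
          simp only [mem_inter, Finset.mem_Iio, mem_erase]
          constructor
          · rintro ⟨h1, h2⟩; exact ⟨ne_of_lt h2, h1⟩
          · rintro ⟨h1, h2⟩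
            exact ⟨h2, lt_of_le_of_ne (S.le_max' j h2) h1⟩
        have hsub : S.erase m ⊂ S := Finset.erase_ssubset hmS
        have hconvx := hc S (Finset.Iio m)
        rw [hunion, hinter] at hconvx
        have hih := ih (S.erase m) hsub
        have hsum : ∑ i ∈ S.erase m, (v (Finset.Iic i) - v (Finset.Iio i))
            + (v (Finset.Iic m) - v (Finset.Iio m))
            = ∑ i ∈ S, (v (Finset.Iic i) - v (Finset.Iio i)) :=
          Finset.sum_erase_add _ _ hmS
        linarith

/-- Every selection convex interval game has a nonempty selection core. -/
theorem selection_convex_selectionCore_nonempty {n : ℕ} (wl wu : Finset (Fin n) → ℝ)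
    (hw : ∀ S, wl S ≤ wu S) (hl0 : wl ∅ = 0) (hu0 : wu ∅ = 0)
    (hconv : ∀ v : Finset (Fin n) → ℝ, IsSelection wl wu v → ConvexGame v) :
    ∃ x : Fin n → ℝ, InSelectionCore wl wu x := by
  have hsel : IsSelection wl wu wl := fun S => ⟨le_rfl, hw S⟩
  obtain ⟨x, hx⟩ := convex_core_nonempty wl hl0 (hconv wl hsel)
  exact ⟨x, wl, hsel, hx⟩
end
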